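/- With X_u^v the Okada character matrix, X_u^v = 0 if and only if some position d_s of a 2 in v equals δ_j + 1 for some position δ_j of a 2 in u (equivalently, v does not split as a concatenation according to the block ranks of u). -/

import Mathlib

/-- A Fibonacci word: a finite word in the alphabet `{1,2}`. -/
def IsFibWord (v : List ℕ) : Prop := ∀ x ∈ v, x = 1 ∨ x = 2

/-- `mOnes u` is `m(u)`, the number of `1`'s at the left end of `u`. -/
def mOnes : List ℕ → ℕ
  | 1 :: t => mOnes t + 1
  | _ => 0

/-- The list of positions of the `2`'s in a Fibonacci word (leftmost `2` first):
if `w = u ++ 2 :: v` then the position of the indicated `2` is `|v| + 1`, where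
`|v|` is the sum of the digits of `v`. -/
def pos2 : List ℕ → List ℕ
  | [] => []
  | 2 :: t => (t.sum + 1) :: pos2 t
  | _ :: t => pos2 t

/-- The Okada character matrix `X_u^v`, defined by Okada's recursions:
`X_{1u}^{1v} = X_u^v`, `X_{2u}^{1v} = X_{1u}^v`, `X_{2u}^{2v} = −X_u^v`,
`X_{11u}^{2v} = (m(u)+1)·X_u^v`, `X_{12u}^{2v} = 0`, `X_∅^∅ = 1`. -/
def okadaX : List ℕ → List ℕ → ℤ
  | [], [] => 1
  | 1 :: u, 1 :: v => okadaX u v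
  | 2 :: u, 1 :: v => okadaX (1 :: u) v
  | 2 :: u, 2 :: v => - okadaX u v
  | 1 :: 1 :: u, 2 :: v => (mOnes u + 1) * okadaX u v
  | 1 :: 2 :: _, 2 :: _ => 0
  | _, _ => 0
  termination_by u v => u.length + v.length
  decreasing_by
    all_goals simp only [List.length_cons]
    all_goals omega

/-!
Induct along Okada's recursion. A `2` in a word `w` sits at a position `< |w|`, so the `2`'s that
a clause strips off sit above every `2` of the remaining words; equal ranks then rule out a new
coincidence `d = δ + 1` in every clause but `X_{12u}^{2v} = 0`, where one is forced. The factors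
`-1` and `m(u) + 1` of the other clauses are nonzero.
-/

@[simp] theorem pos2_cons_two (w : List ℕ) : pos2 (2 :: w) = (w.sum + 1) :: pos2 w := rfl

theorem pos2_cons_of_ne_two {x : ℕ} (hx : x ≠ 2) (w : List ℕ) : pos2 (x :: w) = pos2 w := by
  rw [pos2]
  exact hx

@[simp] theorem pos2_cons_one (w : List ℕ) : pos2 (1 :: w) = pos2 w :=
  pos2_cons_of_ne_two (by decide) w

theorem lt_sum_of_mem_pos2 {w : List ℕ} {d : ℕ} (h : d ∈ pos2 w) : d < w.sum := by
  induction w with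
  | nil => simp [pos2] at h
  | cons x w ih =>
    rw [List.sum_cons]
    by_cases hx : x = 2
    · subst hx
      rcases List.mem_cons.mp h with rfl | h
      · omega
      · have := ih h; omega
    · have := ih (pos2_cons_of_ne_two hx w ▸ h); omega

def TwoAboveTwo (u v : List ℕ) : Prop := ∃ d ∈ pos2 v, ∃ δ ∈ pos2 u, d = δ + 1

theorem twoAboveTwo_cons_two_cons_one {u v : List ℕ} (h : u.sum + 1 = v.sum) :
    TwoAboveTwo (2 :: u) (1 :: v) ↔ TwoAboveTwo (1 :: u) v := by
  have := @lt_sum_of_mem_pos2 v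
  grind [TwoAboveTwo, pos2_cons_two, pos2_cons_one]

theorem twoAboveTwo_cons_two_cons_two {u v : List ℕ} (h : u.sum = v.sum) :
    TwoAboveTwo (2 :: u) (2 :: v) ↔ TwoAboveTwo u v := by
  have := @lt_sum_of_mem_pos2 u
  have := @lt_sum_of_mem_pos2 v
  grind [TwoAboveTwo, pos2_cons_two]

theorem twoAboveTwo_cons_one_cons_one_cons_two {u v : List ℕ} (h : u.sum = v.sum) :
    TwoAboveTwo (1 :: 1 :: u) (2 :: v) ↔ TwoAboveTwo u v := by
  have := @lt_sum_of_mem_pos2 u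
  grind [TwoAboveTwo, pos2_cons_two, pos2_cons_one]

theorem twoAboveTwo_cons_one_cons_two_cons_two {u v : List ℕ} (h : u.sum + 1 = v.sum) :
    TwoAboveTwo (1 :: 2 :: u) (2 :: v) := by
  refine ⟨v.sum + 1, ?_, u.sum + 1, ?_, by omega⟩ <;> simp

theorem IsFibWord.of_cons {x : ℕ} {w : List ℕ} (h : IsFibWord (x :: w)) : IsFibWord w :=
  fun y hy => h y (List.mem_cons_of_mem x hy)

theorem IsFibWord.sum_pos {w : List ℕ} (hw : IsFibWord w) (hne : w ≠ []) : 0 < w.sum := by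
  obtain ⟨x, w, rfl⟩ := List.exists_cons_of_ne_nil hne
  rcases hw x List.mem_cons_self with rfl | rfl <;> simp

-- The hypotheses say that `(u, v)` falls through to the default clause of `okadaX`.
theorem okadaX_clauses_exhaustive {u v : List ℕ} (hu : IsFibWord u) (hv : IsFibWord v)
    (hrank : u.sum = v.sum) (h₁ : u = [] → v = [] → False)
    (h₂ : ∀ u' v', u = 1 :: u' → v = 1 :: v' → False)
    (h₃ : ∀ u' v', u = 2 :: u' → v = 1 :: v' → False)
    (h₄ : ∀ u' v', u = 2 :: u' → v = 2 :: v' → False)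
    (h₅ : ∀ u' v', u = 1 :: 1 :: u' → v = 2 :: v' → False)
    (h₆ : ∀ u' v', u = 1 :: 2 :: u' → v = 2 :: v' → False) : False := by
  rcases u with _ | ⟨x, u⟩ <;> rcases v with _ | ⟨y, v⟩
  · exact h₁ rfl rfl
  · exact (hv.sum_pos (List.cons_ne_nil y v)).ne hrank
  · exact (hu.sum_pos (List.cons_ne_nil x u)).ne' hrank
  rcases hu x List.mem_cons_self with rfl | rfl <;> rcases hv y List.mem_cons_self with rfl | rfl
  · exact h₂ u v rfl rfl
  · rcases u with _ | ⟨z, u⟩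
    · simp at hrank; omega
    rcases hu.of_cons z List.mem_cons_self with rfl | rfl
    · exact h₅ u v rfl rfl
    · exact h₆ u v rfl rfl
  · exact h₃ u v rfl rfl
  · exact h₄ u v rfl rfl

/-- `X_u^v = 0` if and only if some position `d` of a `2` in `v` equals `δ + 1`
for some position `δ` of a `2` in `u`. -/
theorem stmt_17 (u v : List ℕ) (hu : IsFibWord u) (hv : IsFibWord v)
    (hrank : u.sum = v.sum) :
    okadaX u v = 0 ↔ ∃ d ∈ pos2 v, ∃ δ ∈ pos2 u, d = δ + 1 := by
  change okadaX u v = 0 ↔ TwoAboveTwo u v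
  fun_induction okadaX u v with
  | case1 => simp [TwoAboveTwo, pos2]
  | case2 u v ih =>
    exact ih hu.of_cons hv.of_cons (by simpa using hrank)
  | case3 u v ih =>
    simp only [List.sum_cons] at hrank
    rw [twoAboveTwo_cons_two_cons_one (by omega)]
    exact ih (List.forall_mem_cons.mpr ⟨.inl rfl, hu.of_cons⟩) hv.of_cons (by simp only [List.sum_cons]; omega)
  | case4 u v ih =>
    have hsum : u.sum = v.sum := by simpa using hrank
    rw [neg_eq_zero, twoAboveTwo_cons_two_cons_two hsum]
    exact ih hu.of_cons hv.of_cons hsum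
  | case5 u v ih =>
    have hsum : u.sum = v.sum := by simp only [List.sum_cons] at hrank; omega
    rw [mul_eq_zero, or_iff_right (by positivity), twoAboveTwo_cons_one_cons_one_cons_two hsum]
    exact ih hu.of_cons.of_cons hv.of_cons hsum
  | case6 u v =>
    simp only [List.sum_cons] at hrank
    exact iff_of_true rfl (twoAboveTwo_cons_one_cons_two_cons_two (by omega))
  | case7 u v h₁ h₂ h₃ h₄ h₅ h₆ =>
    exact (okadaX_clauses_exhaustive hu hv hrank h₁ h₂ h₃ h₄ h₅ h₆).elim
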